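/- Let k be an integer with 0 ≤ k ≤ m-1, and define a = (γ^(2m+6k+2) + γ^(m+3k+1) + 1)/(3γ^(m+3k+1)), b = (γ^(2m) + γ^(m+3k+1) + γ^(6k+2))/(3γ^(m+3k+1)), c = (γ^(6k+2) + γ^(3k+1) + 1)/(3γ^(3k+1)) in F_q, and let g(x) = a·x^(2m+1) + b·x^(m+1) + c·x. Then for every integer i with 0 ≤ i ≤ m-1 one has g(γ^(3i)) = γ^(3i); that is, g fixes every cube in F_q^*. -/

import Mathlib

/-!
On a cube `x = γ^(3i)` one has `x^m = 1`, so `g x = (a + b + c) x`. With `ω = γ^m`, a primitive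
cube root of unity, and `t = γ^(3k+1)`, the coefficients are `a = (ω²t² + ωt + 1)/(3ωt)`,
`b = (ω² + ωt + t²)/(3ωt)`, `c = (t² + t + 1)/(3t)`, and `a + b + c = 1`.
-/

theorem natCast_ne_zero_of_card_mod_eq_one {F : Type*} [Field F] [Fintype F] {n : ℕ}
    (h : Fintype.card F % n = 1) : (n : F) ≠ 0 := by
  intro hn
  have hcard : ((Fintype.card F : ℕ) : F) = 0 := FiniteField.cast_card_eq_zero F
  rw [← Nat.div_add_mod (Fintype.card F) n, h] at hcard
  push_cast at hcard
  simp [hn] at hcard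

theorem isPrimitiveRoot_of_forall_mem_zpowers {F : Type*} [Field F] [Fintype F] {γ : Fˣ}
    (hγ : ∀ x : Fˣ, x ∈ Subgroup.zpowers γ) : IsPrimitiveRoot (γ : F) (Fintype.card F - 1) := by
  rw [IsPrimitiveRoot.coe_units_iff, ← Nat.card_eq_fintype_card, ← Nat.card_units,
    ← orderOf_eq_card_of_forall_mem_zpowers hγ]
  exact IsPrimitiveRoot.orderOf γ

theorem IsPrimitiveRoot.sq_add_self_add_one {R : Type*} [CommRing R] [IsDomain R] {ω : R}
    (hω : IsPrimitiveRoot ω 3) : ω ^ 2 + ω + 1 = 0 := by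
  have h := hω.geom_sum_eq_zero (by norm_num)
  simp only [Finset.sum_range_succ, Finset.sum_range_zero, pow_zero, pow_one, zero_add] at h
  linear_combination h

/-- Over the common denominator `3ωt` the numerators add up to
`(t² + 1)(ω² + ω + 1) + 3ωt`. -/
theorem coeff_sum_eq_one_of_sq_add_self_add_one_eq_zero {F : Type*} [Field F] {ω t : F}
    (hω : ω ^ 2 + ω + 1 = 0) (h3 : (3 : F) ≠ 0) (ht : t ≠ 0) :
    (ω ^ 2 * t ^ 2 + ω * t + 1) / (3 * (ω * t)) + (ω ^ 2 + ω * t + t ^ 2) / (3 * (ω * t))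
      + (t ^ 2 + t + 1) / (3 * t) = 1 := by
  have hω0 : ω ≠ 0 := by rintro rfl; norm_num at hω
  field_simp
  linear_combination (t ^ 2 + 1) * hω

theorem trinomial_eq_of_pow_eq_one {R : Type*} [CommRing R] (a b c : R) {x : R} {m : ℕ}
    (hx : x ^ m = 1) : a * x ^ (2 * m + 1) + b * x ^ (m + 1) + c * x = (a + b + c) * x := by
  rw [pow_succ, pow_succ, pow_mul', hx]
  ring

theorem stmt1_general (q m : ℕ) (F : Type*) [Field F] [Fintype F]
    (hq : Fintype.card F = q) (hq3 : q % 3 = 1)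
    (hm : m = (q - 1) / 3)
    (γ : Fˣ) (hγ : ∀ x : Fˣ, x ∈ Subgroup.zpowers γ)
    (k : ℕ)
    (a b c : F)
    (ha : a = ((γ : F)^(2*m+6*k+2) + (γ : F)^(m+3*k+1) + 1) / (3 * (γ : F)^(m+3*k+1)))
    (hb : b = ((γ : F)^(2*m) + (γ : F)^(m+3*k+1) + (γ : F)^(6*k+2)) / (3 * (γ : F)^(m+3*k+1)))
    (hc : c = ((γ : F)^(6*k+2) + (γ : F)^(3*k+1) + 1) / (3 * (γ : F)^(3*k+1)))
    (g : F → F)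
    (hg : ∀ x : F, g x = a * x^(2*m+1) + b * x^(m+1) + c * x) :
    ∀ i : ℕ, i ≤ m - 1 → g ((γ : F)^(3*i)) = (γ : F)^(3*i) := by
  intro i _
  have hq2 : 2 ≤ q := hq ▸ Fintype.one_lt_card
  have h3 : (3 : F) ≠ 0 := by
    simpa using natCast_ne_zero_of_card_mod_eq_one (F := F) (n := 3) (hq ▸ hq3)
  have hγ3m : IsPrimitiveRoot (γ : F) (3 * m) := by
    simpa [hq, show q - 1 = 3 * m by omega] using isPrimitiveRoot_of_forall_mem_zpowers hγ
  have hω : ((γ : F) ^ m) ^ 2 + (γ : F) ^ m + 1 = 0 :=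
    (hγ3m.pow (by omega) (mul_comm 3 m)).sq_add_self_add_one
  have habc : a + b + c = 1 := by
    rw [ha, hb, hc]
    convert coeff_sum_eq_one_of_sq_add_self_add_one_eq_zero hω h3
      (pow_ne_zero (3 * k + 1) γ.ne_zero) using 3 <;> ring
  have hcube : ((γ : F) ^ (3 * i)) ^ m = 1 := by
    rw [← pow_mul, mul_right_comm, pow_mul, hγ3m.pow_eq_one, one_pow]
  rw [hg, trinomial_eq_of_pow_eq_one a b c hcube, habc, one_mul]

theorem stmt1 (q m : ℕ) (F : Type*) [Field F] [Fintype F]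
    (hq : Fintype.card F = q) (hodd : Odd q) (hq3 : q % 3 = 1)
    (hm : m = (q - 1) / 3)
    (γ : Fˣ) (hγ : ∀ x : Fˣ, x ∈ Subgroup.zpowers γ)
    (k : ℕ) (hk : k ≤ m - 1)
    (a b c : F)
    (ha : a = ((γ : F)^(2*m+6*k+2) + (γ : F)^(m+3*k+1) + 1) / (3 * (γ : F)^(m+3*k+1)))
    (hb : b = ((γ : F)^(2*m) + (γ : F)^(m+3*k+1) + (γ : F)^(6*k+2)) / (3 * (γ : F)^(m+3*k+1)))
    (hc : c = ((γ : F)^(6*k+2) + (γ : F)^(3*k+1) + 1) / (3 * (γ : F)^(3*k+1)))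
    (g : F → F)
    (hg : ∀ x : F, g x = a * x^(2*m+1) + b * x^(m+1) + c * x) :
    ∀ i : ℕ, i ≤ m - 1 → g ((γ : F)^(3*i)) = (γ : F)^(3*i) :=
  stmt1_general q m F hq hq3 hm γ hγ k a b c ha hb hc g hg
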